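/- Let G = (V,E) be the unit disk graph on a finite set P of points in the plane, and suppose G admits a liar's dominating set. Let S₁, …, S_k ⊆ V be subsets with |S_i| ≥ 3 for each i and δ_G(S_i, S_j) > 4 for all i ≠ j, and let N₁, …, N_k ⊆ V be sets with S_i ⊆ N_i for each i. Let ρ ≥ 1 be a real number such that for every i, the minimum cardinality of a liar's dominating set of N_i in G is at most ρ times the minimum cardinality of a liar's dominating set of S_i in G. Then Σ_{i=1}^{k} |D_opt(N_i)| ≤ ρ·|D_opt(V)|, where D_opt(N_i) is a minimum-cardinality liar's dominating set of N_i in G and D_opt(V) is a minimum-cardinality liar's dominating set of V in G. -/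

import Mathlib

/-- Closed neighborhood of a vertex: the vertex together with its neighbors. -/
def closedNbhd {V : Type*} (G : SimpleGraph V) (v : V) : Set V :=
  {u | u = v ∨ G.Adj u v}

/-- `D` is a liar's dominating set of the vertex subset `A` in `G`. -/
def IsLDSOn {V : Type*} (G : SimpleGraph V) (A D : Set V) : Prop :=
  (∀ v ∈ A, 2 ≤ (closedNbhd G v ∩ D).ncard) ∧
  (∀ u ∈ A, ∀ v ∈ A, u ≠ v →
    3 ≤ ((closedNbhd G u ∪ closedNbhd G v) ∩ D).ncard)

/-- `D` is a liar's dominating set of `G`. -/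
def IsLDS {V : Type*} (G : SimpleGraph V) (D : Set V) : Prop :=
  IsLDSOn G Set.univ D

/-- `I` is an independent set of `G`. -/
def IsIndepSet {V : Type*} (G : SimpleGraph V) (I : Set V) : Prop :=
  ∀ u ∈ I, ∀ v ∈ I, u ≠ v → ¬ G.Adj u v

/-- `I` is a maximal independent set of the subgraph of `G` induced on `A`. -/
def IsMaxIndepOn {V : Type*} (G : SimpleGraph V) (A I : Set V) : Prop :=
  I ⊆ A ∧ IsIndepSet G I ∧
    ∀ J, J ⊆ A → IsIndepSet G J → I ⊆ J → I = J

/-- `I` is a maximal independent set of `G`. -/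
def IsMaxIndep {V : Type*} (G : SimpleGraph V) (I : Set V) : Prop :=
  IsMaxIndepOn G Set.univ I

/-- The unit disk graph on a finite set `P` of points in the plane: two distinct
points are adjacent iff their Euclidean distance is at most 1. -/
def unitDiskGraph (P : Finset (EuclideanSpace ℝ (Fin 2))) : SimpleGraph P where
  Adj p q := p ≠ q ∧ dist (p : EuclideanSpace ℝ (Fin 2)) (q : EuclideanSpace ℝ (Fin 2)) ≤ 1
  symm := by
    constructor
    intro p q h
    exact ⟨h.1.symm, by rw [dist_comm]; exact h.2⟩
  loopless := by
    constructor
    intro p h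
    exact h.1 rfl

/-!
Restrict the liar's dominating set `Dopt` of the whole graph to the closed neighbourhood
of each `S i`. The restriction is still a liar's dominating set of `S i`, because only vertices of
`N[S i]` are ever counted for `S i`. Since the sets `S i` are more than two hops apart, their closed
neighbourhoods are pairwise disjoint, so these restrictions are disjoint pieces of `Dopt`. Hence
`∑ |DN i| ≤ ρ ∑ |DS i| ≤ ρ ∑ |Dopt ∩ N[S i]| ≤ ρ |Dopt|`.
-/

open Function

section ClosedNbhd

variable {V : Type*} {G : SimpleGraph V}

lemma exists_walk_length_le_one_of_mem_closedNbhd {u v : V} (h : u ∈ closedNbhd G v) :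
    ∃ p : G.Walk u v, p.length ≤ 1 := by
  rcases h with rfl | hadj
  · exact ⟨.nil, by simp⟩
  · exact ⟨hadj.toWalk, by simp⟩

lemma reachable_and_dist_le_two_of_mem_closedNbhd {u v d : V}
    (hu : d ∈ closedNbhd G u) (hv : d ∈ closedNbhd G v) :
    G.Reachable u v ∧ G.dist u v ≤ 2 := by
  obtain ⟨p, hp⟩ := exists_walk_length_le_one_of_mem_closedNbhd hu
  obtain ⟨q, hq⟩ := exists_walk_length_le_one_of_mem_closedNbhd hv
  refine ⟨⟨p.reverse.append q⟩, (SimpleGraph.dist_le (p.reverse.append q)).trans ?_⟩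
  simp only [SimpleGraph.Walk.length_append, SimpleGraph.Walk.length_reverse]
  omega

lemma disjoint_biUnion_closedNbhd {A B : Set V}
    (h : ∀ u ∈ A, ∀ v ∈ B, G.Reachable u v → 2 < G.dist u v) :
    Disjoint (⋃ u ∈ A, closedNbhd G u) (⋃ v ∈ B, closedNbhd G v) := by
  rw [Set.disjoint_left]
  simp only [Set.mem_iUnion]
  rintro d ⟨u, hu, hdu⟩ ⟨v, hv, hdv⟩
  obtain ⟨hreach, hle⟩ := reachable_and_dist_le_two_of_mem_closedNbhd hdu hdv
  exact absurd (h u hu v hv hreach) (not_lt.mpr hle)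

lemma IsLDSOn.inter_biUnion_closedNbhd {A A' D : Set V} (hD : IsLDSOn G A' D) (hA : A ⊆ A') :
    IsLDSOn G A (D ∩ ⋃ w ∈ A, closedNbhd G w) := by
  have key : ∀ v ∈ A, closedNbhd G v ∩ (D ∩ ⋃ w ∈ A, closedNbhd G w) = closedNbhd G v ∩ D :=
    fun v hv => by
      rw [← Set.inter_assoc, Set.inter_eq_left.mpr
        (Set.inter_subset_left.trans (Set.subset_biUnion_of_mem hv))]
  refine ⟨fun v hv => key v hv ▸ hD.1 v (hA hv), fun u hu v hv huv => ?_⟩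
  rw [Set.union_inter_distrib_right, key u hu, key v hv, ← Set.union_inter_distrib_right]
  exact hD.2 u (hA hu) v (hA hv) huv

end ClosedNbhd

lemma Set.sum_ncard_le_ncard_of_pairwise_disjoint {α ι : Type*} [Fintype ι] {s : ι → Set α}
    {t : Set α} (ht : t.Finite) (hst : ∀ i, s i ⊆ t) (hs : Pairwise (Disjoint on s)) :
    ∑ i, (s i).ncard ≤ t.ncard := by
  rw [← finsum_eq_sum_of_fintype,
    ← Set.ncard_iUnion_of_finite (fun i => ht.subset (hst i)) hs]
  exact Set.ncard_le_ncard (Set.iUnion_subset hst) ht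

theorem four_separated_sum_le_rho_opt_general
    (P : Finset (EuclideanSpace ℝ (Fin 2)))
    (k : ℕ) (S : Fin k → Set ↥P)
    (hsep : ∀ i j, i ≠ j → ∀ u ∈ S i, ∀ v ∈ S j,
      (unitDiskGraph P).Reachable u v → 4 < (unitDiskGraph P).dist u v)
    (ρ : ℝ) (hρ : 1 ≤ ρ)
    (DS : Fin k → Set ↥P)
    (hDSmin : ∀ i, ∀ D' : Set ↥P, IsLDSOn (unitDiskGraph P) (S i) D' →
      (DS i).ncard ≤ D'.ncard)
    (DN : Fin k → Set ↥P)
    (hrho : ∀ i, ((DN i).ncard : ℝ) ≤ ρ * (DS i).ncard)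
    (Dopt : Set ↥P)
    (hDopt : IsLDS (unitDiskGraph P) Dopt) :
    (∑ i, ((DN i).ncard : ℝ)) ≤ ρ * Dopt.ncard := by
  set G := unitDiskGraph P
  let B : Fin k → Set ↥P := fun i => Dopt ∩ ⋃ v ∈ S i, closedNbhd G v
  have hDS_le : ∀ i, (DS i).ncard ≤ (B i).ncard := fun i =>
    hDSmin i (B i) (hDopt.inter_biUnion_closedNbhd (Set.subset_univ _))
  have hB_disjoint : Pairwise (Disjoint on B) := fun i j hij =>
    ((disjoint_biUnion_closedNbhd fun u hu v hv hreach =>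
      (hsep i j hij u hu v hv hreach).trans' (by norm_num)).mono
        Set.inter_subset_right Set.inter_subset_right)
  have hsum : ∑ i, (DS i).ncard ≤ Dopt.ncard :=
    (Finset.sum_le_sum fun i _ => hDS_le i).trans
      (Set.sum_ncard_le_ncard_of_pairwise_disjoint Dopt.toFinite
        (fun _ => Set.inter_subset_left) hB_disjoint)
  calc (∑ i, ((DN i).ncard : ℝ)) ≤ ∑ i, ρ * ((DS i).ncard : ℝ) :=
        Finset.sum_le_sum fun i _ => hrho i
    _ = ρ * ∑ i, ((DS i).ncard : ℝ) := (Finset.mul_sum _ _ _).symm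
    _ ≤ ρ * Dopt.ncard := mul_le_mul_of_nonneg_left (by exact_mod_cast hsum) (by linarith)

theorem four_separated_sum_le_rho_opt
    (P : Finset (EuclideanSpace ℝ (Fin 2)))
    (hex : ∃ D : Set ↥P, IsLDS (unitDiskGraph P) D)
    (k : ℕ) (S N : Fin k → Set ↥P)
    (hsize : ∀ i, 3 ≤ (S i).ncard)
    (hsep : ∀ i j, i ≠ j → ∀ u ∈ S i, ∀ v ∈ S j,
      (unitDiskGraph P).Reachable u v → 4 < (unitDiskGraph P).dist u v)
    (hSN : ∀ i, S i ⊆ N i)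
    (ρ : ℝ) (hρ : 1 ≤ ρ)
    (DS : Fin k → Set ↥P)
    (hDS : ∀ i, IsLDSOn (unitDiskGraph P) (S i) (DS i))
    (hDSmin : ∀ i, ∀ D' : Set ↥P, IsLDSOn (unitDiskGraph P) (S i) D' →
      (DS i).ncard ≤ D'.ncard)
    (DN : Fin k → Set ↥P)
    (hDN : ∀ i, IsLDSOn (unitDiskGraph P) (N i) (DN i))
    (hDNmin : ∀ i, ∀ D' : Set ↥P, IsLDSOn (unitDiskGraph P) (N i) D' →
      (DN i).ncard ≤ D'.ncard)
    (hrho : ∀ i, ((DN i).ncard : ℝ) ≤ ρ * (DS i).ncard)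
    (Dopt : Set ↥P)
    (hDopt : IsLDS (unitDiskGraph P) Dopt)
    (hDoptMin : ∀ D : Set ↥P, IsLDS (unitDiskGraph P) D → Dopt.ncard ≤ D.ncard) :
    (∑ i, ((DN i).ncard : ℝ)) ≤ ρ * Dopt.ncard :=
  four_separated_sum_le_rho_opt_general P k S hsep ρ hρ DS hDSmin DN hrho Dopt hDopt
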